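/- (Consistency of the intersection order.) Let h† be a partial order on a finite set V and let (Y_j)_{j≥1} be independent random lists, each uniformly distributed on L[h†]. For N ≥ 1 let h^int_N be the intersection order of Y_1, …, Y_N. Then almost surely h^int_N = h† for all sufficiently large N; in particular P(h^int_N = h†) → 1 as N → ∞, so the intersection order converges in probability to the true partial order as the number of sampled linear extensions goes to infinity. -/

import Mathlib

/-!
Almost surely every `Y t` is a linear extension of `h†`, so `h† ⊆ h^int_N` for all `N`.
Conversely, if `¬ i ≻ j` there is a linear extension in which `i` does not precede `j`: any one
when `i = j`, otherwise a linear extension of `h†` with `j ≻ i` adjoined. It has positive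
uniform probability, so by independence it almost surely occurs among the `Y t`, and from then on
`i ≻ j` is absent from `h^int_N`. With finitely many pairs, almost surely `h^int_N = h†`
eventually, and almost sure eventual equality forces `P(h^int_N = h†) → 1`.
-/

open MeasureTheory ProbabilityTheory Filter

/-- A (strict) partial order on `V`: an irreflexive transitive binary relation. -/
def IsPartialOrderOn {V : Type*} (r : V → V → Prop) : Prop :=
  (∀ a, ¬ r a a) ∧ (∀ a b c, r a b → r b c → r a c)

/-- `l` is a linear extension of the partial order `r`: it enumerates `V` without
repetition and for `a < b` it is not the case that `l_b ≻ l_a`. -/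
def IsLinext {V : Type*} (r : V → V → Prop) (l : List V) : Prop :=
  l.Nodup ∧ (∀ v : V, v ∈ l) ∧
    ∀ a b : Fin l.length, a < b → ¬ r (l.get b) (l.get a)

/-- `i` appears (strictly) before `j` in the list `l`. -/
def Before {V : Type*} [DecidableEq V] (l : List V) (i j : V) : Prop :=
  l.idxOf i < l.idxOf j

open Topology

section LinearExtensions

variable {V : Type*} {r q : V → V → Prop} {l : List V}

theorem IsLinext.mono (hrq : ∀ a b, r a b → q a b) (hl : IsLinext q l) : IsLinext r l :=
  ⟨hl.1, hl.2.1, fun a b hab h => hl.2.2 a b hab (hrq _ _ h)⟩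

theorem isLinext_sort_univ [Fintype V] (s : V → V → Prop) [IsLinearOrder V s] [DecidableRel s]
    (hrs : ∀ a b, r a b → s a b) : IsLinext r (Finset.univ.sort s) := by
  set l := Finset.univ.sort s
  have hnodup : l.Nodup := Finset.sort_nodup _ s
  refine ⟨hnodup, fun v => (Finset.mem_sort s).2 (Finset.mem_univ v), fun a b hab hr => ?_⟩
  have hab' : s (l.get a) (l.get b) := (Finset.pairwise_sort _ s).rel_get_of_lt hab
  exact hab.ne (hnodup.get_inj_iff.1 (antisymm hab' (hrs _ _ hr)))

theorem IsPartialOrderOn.isStrictOrder (hpo : IsPartialOrderOn r) : IsStrictOrder V r :=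
  { irrefl := hpo.1, trans := hpo.2 }

theorem exists_isLinext [Finite V] (hpo : IsPartialOrderOn r) : ∃ l, IsLinext r l := by
  classical
  have := Fintype.ofFinite V
  have := hpo.isStrictOrder
  let := partialOrderOfSO r
  obtain ⟨s, hs, hle⟩ := extend_partialOrder (α := V) (· ≤ ·)
  exact ⟨_, isLinext_sort_univ s fun a b h => hle a b (Or.inr h)⟩

theorem setOf_isLinext_finite [Finite V] (r : V → V → Prop) : {l | IsLinext r l}.Finite :=
  have := Fintype.ofFinite V
  (List.finite_length_le V (Fintype.card V)).subset fun _ hl => hl.1.length_le_card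

/-- The transitive closure of `r` with the pair `j ≻ i` added. -/
def adjoinPair (r : V → V → Prop) (j i : V) (a b : V) : Prop :=
  r a b ∨ ((a = j ∨ r a j) ∧ (b = i ∨ r i b))

theorem IsPartialOrderOn.adjoinPair {i j : V} (hpo : IsPartialOrderOn r) (hne : i ≠ j)
    (hij : ¬ r i j) : IsPartialOrderOn (adjoinPair r j i) := by
  obtain ⟨hirr, htrans⟩ := hpo
  constructor
  · rintro a (h | ⟨rfl | h1, rfl | h2⟩)
    · exact hirr a h
    · exact hne rfl
    · exact hij h2
    · exact hij h1
    · exact hij (htrans _ _ _ h2 h1)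
  · rintro a b c (hab | ⟨h1, h2⟩) (hbc | ⟨h3, h4⟩)
    · exact Or.inl (htrans _ _ _ hab hbc)
    · refine Or.inr ⟨Or.inr ?_, h4⟩
      rcases h3 with rfl | h3
      · exact hab
      · exact htrans _ _ _ hab h3
    · refine Or.inr ⟨h1, Or.inr ?_⟩
      rcases h2 with rfl | h2
      · exact hbc
      · exact htrans _ _ _ h2 hbc
    · exfalso
      rcases h2 with rfl | h2 <;> rcases h3 with h3 | h3
      · exact hne h3
      · exact hij h3
      · exact hij (h3 ▸ h2)
      · exact hij (htrans _ _ _ h2 h3)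

variable [DecidableEq V]

theorem not_before_self (l : List V) (i : V) : ¬ Before l i i := lt_irrefl _

theorem Before.not_before {i j : V} (h : Before l i j) : ¬ Before l j i := lt_asymm h

theorem IsLinext.before_of_rel (hl : IsLinext r l) (hirr : ∀ a, ¬ r a a) {i j : V}
    (h : r i j) : Before l i j := by
  obtain ⟨-, hmem, hord⟩ := hl
  have hi := List.idxOf_lt_length_iff.2 (hmem i)
  have hj := List.idxOf_lt_length_iff.2 (hmem j)
  rcases lt_or_ge (l.idxOf i) (l.idxOf j) with hlt | hge
  · exact hlt
  rcases hge.lt_or_eq with hgt | heq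
  · have := hord ⟨_, hj⟩ ⟨_, hi⟩ hgt
    rw [List.idxOf_get, List.idxOf_get] at this
    exact absurd h this
  · rw [List.idxOf_inj (hmem i) |>.1 heq.symm] at h
    exact absurd h (hirr j)

theorem exists_isLinext_not_before [Finite V] (hpo : IsPartialOrderOn r) {i j : V}
    (h : ¬ r i j) : ∃ l, IsLinext r l ∧ ¬ Before l i j := by
  by_cases hij : i = j
  · obtain ⟨l, hl⟩ := exists_isLinext hpo
    exact ⟨l, hl, hij ▸ not_before_self l i⟩
  · have hq := hpo.adjoinPair hij h
    obtain ⟨l, hl⟩ := exists_isLinext hq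
    exact ⟨l, hl.mono fun _ _ => Or.inl,
      (hl.before_of_rel hq.1 (Or.inr ⟨Or.inl rfl, Or.inl rfl⟩)).not_before⟩

end LinearExtensions

/-- The intersection order `h^int_N` of `y 0, …, y (N - 1)`. -/
def interOrder {V : Type*} [DecidableEq V] (y : ℕ → List V) (N : ℕ) (i j : V) : Prop :=
  ∀ t < N, Before (y t) i j

theorem eventually_interOrder_eq {V : Type*} [Finite V] [DecidableEq V] {r : V → V → Prop}
    {y : ℕ → List V} (hrel : ∀ t i j, r i j → Before (y t) i j)
    (hwit : ∀ i j, ¬ r i j → ∃ t, ¬ Before (y t) i j) :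
    ∀ᶠ N in atTop, interOrder y N = r := by
  have hpair : ∀ i j, ∀ᶠ N in atTop, (interOrder y N i j ↔ r i j) := by
    intro i j
    by_cases h : r i j
    · exact Eventually.of_forall fun N => iff_of_true (fun t _ => hrel t i j h) h
    · obtain ⟨t, ht⟩ := hwit i j h
      filter_upwards [eventually_gt_atTop t] with N hN
      exact iff_of_false (fun H => ht (H t hN)) h
  filter_upwards [eventually_all.2 fun i => eventually_all.2 (hpair i)] with N hN
  funext i j
  exact propext (hN i j)

section Probability

variable {Ω β : Type*} [MeasurableSpace Ω] [MeasurableSpace β] {μ : Measure Ω}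

theorem tendsto_measure_of_ae_eventually_mem [IsProbabilityMeasure μ] {E : ℕ → Set Ω}
    (h : ∀ᵐ ω ∂μ, ∀ᶠ N in atTop, ω ∈ E N) : Tendsto (fun N => μ (E N)) atTop (𝓝 1) := by
  set F : ℕ → Set Ω := fun N => ⋂ k ≥ N, E k
  have hFmono : Monotone F := fun _ _ hMN =>
    Set.biInter_mono (fun _ hk => hMN.trans hk) fun _ _ => subset_rfl
  have hF1 : μ (⋃ N, F N) = 1 := by
    refine le_antisymm prob_le_one ?_
    rw [← measure_univ (μ := μ)]
    refine measure_mono_ae ?_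
    filter_upwards [h] with ω hω _
    obtain ⟨N, hN⟩ := eventually_atTop.1 hω
    exact Set.mem_iUnion.2 ⟨N, Set.mem_iInter₂.2 hN⟩
  refine tendsto_of_tendsto_of_tendsto_of_le_of_le (hF1 ▸ tendsto_measure_iUnion_atTop hFmono)
    tendsto_const_nhds (fun N => measure_mono (Set.biInter_subset_of_mem le_rfl))
    fun _ => prob_le_one

theorem ae_exists_mem_of_iIndepFun {Y : ℕ → Ω → β} (hmeas : ∀ t, Measurable (Y t))
    (hindep : iIndepFun Y μ) {ν : Measure β} (hdist : ∀ t, μ.map (Y t) = ν) {s : Set β}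
    (hs : MeasurableSet s) (hνs : ν s ≠ 0) : ∀ᵐ ω ∂μ, ∃ t, Y t ω ∈ s := by
  have := hindep.isProbabilityMeasure
  have hmiss : ∀ t, μ (Y t ⁻¹' sᶜ) = 1 - ν s := fun t => by
    rw [Set.preimage_compl, prob_compl_eq_one_sub (hmeas t hs), ← Measure.map_apply (hmeas t) hs,
      hdist t]
  have hle : ∀ N, μ {ω | ∀ t, Y t ω ∉ s} ≤ (1 - ν s) ^ N := fun N =>
    calc μ {ω | ∀ t, Y t ω ∉ s}
        ≤ μ (⋂ t ∈ Finset.range N, Y t ⁻¹' sᶜ) :=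
          measure_mono fun ω hω => Set.mem_iInter₂.2 fun t _ => hω t
      _ = ∏ t ∈ Finset.range N, μ (Y t ⁻¹' sᶜ) :=
          hindep.measure_inter_preimage_eq_mul _ fun _ _ => hs.compl
      _ = (1 - ν s) ^ N := by simp only [hmiss, Finset.prod_const, Finset.card_range]
  have hlt : 1 - ν s < 1 := ENNReal.sub_lt_self ENNReal.one_ne_top one_ne_zero hνs
  simp only [ae_iff, not_exists]
  exact nonpos_iff_eq_zero.1
    (ge_of_tendsto' (ENNReal.tendsto_pow_atTop_nhds_zero_of_lt_one hlt) hle)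

end Probability

open Classical in
theorem intersection_order_consistent {V : Type*} [Fintype V] [DecidableEq V]
    (rtrue : V → V → Prop) (hpo : IsPartialOrderOn rtrue)
    {Ω : Type*} [MeasurableSpace Ω] (μ : Measure Ω) [IsProbabilityMeasure μ]
    [MeasurableSpace (List V)] [MeasurableSingletonClass (List V)]
    (Y : ℕ → Ω → List V) (hmeas : ∀ j, Measurable (Y j))
    (hindep : iIndepFun (m := fun _ => ‹MeasurableSpace (List V)›) Y μ)
    (hdist : ∀ j, Measure.map (Y j) μ = uniformOn {l : List V | IsLinext rtrue l}) :
    (∀ᵐ ω ∂μ, ∃ N₀ : ℕ, ∀ N ≥ N₀,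
        (fun i j : V => ∀ t < N, Before (Y t ω) i j) = rtrue) ∧
    Tendsto (fun N : ℕ =>
        μ {ω | (fun i j : V => ∀ t < N, Before (Y t ω) i j) = rtrue})
      atTop (nhds 1) := by
  have hfin := setOf_isLinext_finite rtrue
  have hlin : ∀ᵐ ω ∂μ, ∀ t, IsLinext rtrue (Y t ω) := ae_all_iff.2 fun t =>
    ae_of_ae_map (hmeas t).aemeasurable (hdist t ▸ ae_cond_mem hfin.measurableSet)
  have hwit : ∀ᵐ ω ∂μ, ∀ i j, ¬ rtrue i j → ∃ t, ¬ Before (Y t ω) i j := by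
    refine ae_all_iff.2 fun i => ae_all_iff.2 fun j => ?_
    by_cases h : rtrue i j
    · exact ae_of_all _ fun _ h' => absurd h h'
    obtain ⟨l, hl, hnb⟩ := exists_isLinext_not_before hpo h
    have hpos : uniformOn {l | IsLinext rtrue l} {l} ≠ 0 := by
      rw [Ne, uniformOn_eq_zero_iff hfin]
      exact Set.nonempty_iff_ne_empty.1 ⟨l, hl, rfl⟩
    filter_upwards [ae_exists_mem_of_iIndepFun hmeas hindep hdist (measurableSet_singleton l) hpos]
      with ω ⟨t, ht⟩ _
    exact ⟨t, (Set.mem_singleton_iff.1 ht) ▸ hnb⟩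
  have hae : ∀ᵐ ω ∂μ, ∀ᶠ N in atTop, interOrder (Y · ω) N = rtrue := by
    filter_upwards [hlin, hwit] with ω hl hw
    exact eventually_interOrder_eq (fun t _ _ => (hl t).before_of_rel hpo.1) hw
  exact ⟨hae.mono fun _ h => eventually_atTop.1 h, tendsto_measure_of_ae_eventually_mem hae⟩
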